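/- arXiv:1512.00836 — 5 statements merged into one kernel-verified Lean document; each statement's English description precedes it below -/
import Mathlib

section
/- Let 0 < r < R be real numbers, z₀ ∈ ℂ, and 0 < m ≤ M. Suppose F is a holomorphic function on an open set containing the closed disc {z : |z − z₀| ≤ R}, that |F(z)| ≤ M for all z with |z − z₀| ≤ R, and that |F(z₀)| ≥ m. Then the set of zeros of F in the closed disc {z : |z − z₀| ≤ r} is finite, and the number of these zeros counted with multiplicity is at most (log M − log m)/log(R/r). -/
/-!
Divide `F` by the `k`-th power of the Blaschke factor of a zero `a` of multiplicity `k` in the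
small disc. The quotient is holomorphic, has the same modulus as `F` on the circle
`|w - z₀| = R`, keeps the other zeros, and its value at the centre is `(R / |z₀ - a|)^k ≥ (R / r)^k`
times larger. After all the zeros are removed, the maximum modulus principle
bounds the value at the centre by `M`, so `m ≤ |F z₀| ≤ M (r / R)^N` with `N` the number of zeros.
-/

open Metric Filter Topology ComplexConjugate

section DivideOutZero

variable {𝕜 E : Type*} [NontriviallyNormedField 𝕜] [NormedAddCommGroup E] [NormedSpace 𝕜 E]
  {f : 𝕜 → E} {U : Set 𝕜} {a : 𝕜} {k : ℕ}

theorem AnalyticOnNhd.exists_eq_pow_smul_of_le_analyticOrderAt (hf : AnalyticOnNhd 𝕜 f U)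
    (ha : a ∈ U) (hk : (k : ℕ∞) ≤ analyticOrderAt f a) :
    ∃ q : 𝕜 → E, AnalyticOnNhd 𝕜 q U ∧ ∀ w, f w = (w - a) ^ k • q w := by
  classical
  obtain ⟨g, hg, hfg⟩ := (natCast_le_analyticOrderAt (hf a ha)).mp hk
  set q := Function.update (fun w => ((w - a) ^ k)⁻¹ • f w) a (g a)
  have hqg : q =ᶠ[𝓝 a] g := by
    filter_upwards [hfg] with w hw
    rcases eq_or_ne w a with rfl | hwa
    · simp [q]
    · simp [q, hwa, hw, smul_smul, sub_ne_zero.mpr hwa]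
  refine ⟨q, fun w hw => ?_, fun w => ?_⟩
  · rcases eq_or_ne w a with rfl | hwa
    · exact hg.congr hqg.symm
    · have hq : (fun w => ((w - a) ^ k)⁻¹ • f w) =ᶠ[𝓝 w] q := by
        filter_upwards [eventually_ne_nhds hwa] with v hv
        simp [q, hv]
      refine (AnalyticAt.smul ?_ (hf w hw)).congr hq
      exact ((analyticAt_id.sub analyticAt_const).pow k).inv (pow_ne_zero _ (sub_ne_zero.mpr hwa))
  · rcases eq_or_ne w a with rfl | hwa
    · simpa [q] using hfg.self_of_nhds
    · simp [q, hwa, smul_smul, sub_ne_zero.mpr hwa]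

end DivideOutZero

/-- The Blaschke factor of the disc `closedBall z₀ R` vanishing at `a` is
`w ↦ (w - a) / blaschkeDenom z₀ a R w`. -/
noncomputable def blaschkeDenom (z₀ a : ℂ) (R : ℝ) (w : ℂ) : ℂ :=
  (R ^ 2 - conj (a - z₀) * (w - z₀)) / R

theorem analyticAt_blaschkeDenom (z₀ a : ℂ) (R : ℝ) (w : ℂ) :
    AnalyticAt ℂ (blaschkeDenom z₀ a R) w := by
  unfold blaschkeDenom; fun_prop

theorem blaschkeDenom_self {R : ℝ} (hR : R ≠ 0) (z₀ a : ℂ) : blaschkeDenom z₀ a R z₀ = R := by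
  have : (R : ℂ) ≠ 0 := by exact_mod_cast hR
  simp only [blaschkeDenom, sub_self, mul_zero, sub_zero]
  field_simp

theorem norm_blaschkeDenom_of_mem_sphere {R : ℝ} (hR : 0 < R) {z₀ w : ℂ} (hw : w ∈ sphere z₀ R)
    (a : ℂ) : ‖blaschkeDenom z₀ a R w‖ = ‖w - a‖ := by
  have hu : ‖w - z₀‖ = R := by simpa [dist_eq_norm] using hw
  have hR2 : (R : ℂ) ^ 2 = (w - z₀) * conj (w - z₀) := by
    rw [Complex.mul_conj', hu]
  have : (R : ℂ) ^ 2 - conj (a - z₀) * (w - z₀) = (w - z₀) * conj (w - a) := by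
    rw [hR2, map_sub conj w a, map_sub conj a z₀, map_sub conj w z₀]; ring
  rw [blaschkeDenom, this, norm_div, norm_mul, Complex.norm_conj, hu, Complex.norm_real,
    Real.norm_of_nonneg hR.le]
  field_simp

theorem Complex.norm_le_of_forall_mem_sphere_norm_le {E : Type*} [NormedAddCommGroup E]
    [NormedSpace ℂ E] {f : ℂ → E} {z₀ z : ℂ} {R M : ℝ} (hR : R ≠ 0)
    (hf : DifferentiableOn ℂ f (closedBall z₀ R)) (hM : ∀ w ∈ sphere z₀ R, ‖f w‖ ≤ M)
    (hz : z ∈ closedBall z₀ R) : ‖f z‖ ≤ M := by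
  rw [← closure_ball z₀ hR] at hf hz
  exact Complex.norm_le_of_forall_mem_frontier_norm_le isBounded_ball hf.diffContOnCl
    (fun w hw => hM w (frontier_ball_subset_sphere hw)) hz

theorem norm_le_mul_pow_sum_of_le_analyticOrderAt {F : ℂ → ℂ} {z₀ : ℂ} {r R M : ℝ} (hR : 0 < R)
    (hF : AnalyticOnNhd ℂ F (closedBall z₀ R)) (hM : ∀ w ∈ sphere z₀ R, ‖F w‖ ≤ M)
    (hrR : r ≤ R) (Z : Finset ℂ) (hZ : ∀ z ∈ Z, z ∈ closedBall z₀ r) (n : ℂ → ℕ)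
    (hn : ∀ z ∈ Z, (n z : ℕ∞) ≤ analyticOrderAt F z) :
    ‖F z₀‖ ≤ M * (r / R) ^ ∑ z ∈ Z, n z := by
  induction Z using Finset.induction_on generalizing F with
  | empty =>
    simpa using Complex.norm_le_of_forall_mem_sphere_norm_le hR.ne' hF.differentiableOn hM
      (mem_closedBall_self hR.le)
  | insert a Z haZ ih =>
    have ha : a ∈ closedBall z₀ R := closedBall_subset_closedBall hrR (hZ a (by simp))
    obtain ⟨q, hq, hFq⟩ := hF.exists_eq_pow_smul_of_le_analyticOrderAt ha (hn a (by simp))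
    simp only [smul_eq_mul] at hFq
    set F₁ := fun w => q w * blaschkeDenom z₀ a R w ^ n a
    have hF₁ : AnalyticOnNhd ℂ F₁ (closedBall z₀ R) := fun w hw =>
      (hq w hw).mul ((analyticAt_blaschkeDenom z₀ a R w).pow _)
    have hF₁M : ∀ w ∈ sphere z₀ R, ‖F₁ w‖ ≤ M := fun w hw => by
      simpa [F₁, hFq w, norm_blaschkeDenom_of_mem_sphere hR hw, mul_comm] using hM w hw
    have hF₁n : ∀ z ∈ Z, (n z : ℕ∞) ≤ analyticOrderAt F₁ z := fun z hz => by
      have hzR : z ∈ closedBall z₀ R := closedBall_subset_closedBall hrR (hZ z (by simp [hz]))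
      have hP : AnalyticAt ℂ (fun w => (w - a) ^ n a) z := by fun_prop
      have hPz : (z - a) ^ n a ≠ 0 := pow_ne_zero _ (sub_ne_zero.mpr (ne_of_mem_of_not_mem hz haZ))
      have hFF₁ : analyticOrderAt F z ≤ analyticOrderAt F₁ z := by
        rw [show F = (fun w => (w - a) ^ n a) * q from funext hFq,
          show F₁ = q * fun w => blaschkeDenom z₀ a R w ^ n a from rfl,
          analyticOrderAt_mul hP (hq z hzR),
          analyticOrderAt_mul (hq z hzR)
            (show AnalyticAt ℂ (fun w => blaschkeDenom z₀ a R w ^ n a) z from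
              (analyticAt_blaschkeDenom z₀ a R z).pow _),
          hP.analyticOrderAt_eq_zero.mpr hPz, zero_add]
        exact le_self_add
      exact (hn z (by simp [hz])).trans hFF₁
    have har : ‖z₀ - a‖ ≤ r := by simpa [dist_eq_norm'] using hZ a (by simp)
    have hstep : ‖F z₀‖ ≤ (r / R) ^ n a * ‖F₁ z₀‖ := calc
      ‖F z₀‖ = ‖z₀ - a‖ ^ n a * ‖q z₀‖ := by rw [hFq, norm_mul, norm_pow]
      _ ≤ r ^ n a * ‖q z₀‖ := by gcongr
      _ = (r / R) ^ n a * ‖F₁ z₀‖ := by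
        simp only [F₁, blaschkeDenom_self hR.ne', norm_mul, norm_pow, Complex.norm_real,
          Real.norm_of_nonneg hR.le, div_pow]
        field_simp
    calc ‖F z₀‖ ≤ (r / R) ^ n a * ‖F₁ z₀‖ := hstep
      _ ≤ (r / R) ^ n a * (M * (r / R) ^ ∑ z ∈ Z, n z) := by
        have : 0 ≤ r := (norm_nonneg _).trans har
        gcongr
        exact ih hF₁ hF₁M (fun z hz => hZ z (by simp [hz])) hF₁n
      _ = M * (r / R) ^ ∑ z ∈ insert a Z, n z := by
        rw [Finset.sum_insert haZ, pow_add]; ring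

theorem AnalyticOnNhd.finite_zeros_of_isCompact {𝕜 E : Type*} [NontriviallyNormedField 𝕜]
    [NormedAddCommGroup E] [NormedSpace 𝕜 E] {f : 𝕜 → E} {U K : Set 𝕜} {z₀ : 𝕜}
    (hf : AnalyticOnNhd 𝕜 f U) (hU : IsPreconnected U) (hK : IsCompact K) (hKU : K ⊆ U)
    (hz₀ : z₀ ∈ U) (hfz₀ : f z₀ ≠ 0) : {z ∈ K | f z = 0}.Finite := by
  by_contra hinf
  obtain ⟨x, hxK, hacc⟩ :=
    Set.Infinite.exists_accPt_of_subset_isCompact hinf hK fun z hz => hz.1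
  have hfreq : ∃ᶠ w in 𝓝[≠] x, f w = 0 :=
    (accPt_iff_frequently_nhdsNE.mp hacc).mono fun w hw => hw.2
  exact hfz₀ (hf.eqOn_zero_of_preconnected_of_frequently_eq_zero hU (hKU hxK) hfreq hz₀)

theorem natCast_le_log_div_log_of_le_mul_pow {r R m M : ℝ} (hr : 0 < r) (hrR : r < R) (hm : 0 < m)
    {N : ℕ} (hN : m ≤ M * (r / R) ^ N) :
    (N : ℝ) ≤ (Real.log M - Real.log m) / Real.log (R / r) := by
  have hR : 0 < R := hr.trans hrR
  have hM : 0 < M := by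
    have := hm.trans_le hN
    exact pos_of_mul_pos_left this (by positivity)
  rw [le_div_iff₀ (Real.log_pos ((one_lt_div hr).mpr hrR))]
  have := Real.log_le_log hm hN
  rw [Real.log_mul hM.ne' (by positivity), Real.log_pow, Real.log_div hr.ne' hR.ne'] at this
  rw [Real.log_div hR.ne' hr.ne']
  linarith

theorem stmt0_general (r R : ℝ) (hr : 0 < r) (hrR : r < R) (z₀ : ℂ) (m M : ℝ)
    (hm : 0 < m) (F : ℂ → ℂ) (s : Set ℂ) (hs : IsOpen s)
    (hsub : Metric.closedBall z₀ R ⊆ s) (hF : DifferentiableOn ℂ F s)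
    (hbd : ∀ z ∈ Metric.closedBall z₀ R, ‖F z‖ ≤ M)
    (hlow : m ≤ ‖F z₀‖) :
    ∃ Z : Finset ℂ,
      (∀ z : ℂ, z ∈ Z ↔ z ∈ Metric.closedBall z₀ r ∧ F z = 0) ∧
      ∀ mult : ℂ → ℕ,
        (∀ z ∈ Z, ∃ g : ℂ → ℂ, AnalyticAt ℂ g z ∧ g z ≠ 0 ∧
          ∀ᶠ w in nhds z, F w = (w - z) ^ (mult z) * g w) →
        (∑ z ∈ Z, (mult z : ℝ)) ≤ (Real.log M - Real.log m) / Real.log (R / r) := by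
  have hR : 0 < R := hr.trans hrR
  have hFan : AnalyticOnNhd ℂ F (closedBall z₀ R) := fun z hz => hF.analyticOnNhd hs z (hsub hz)
  have hFz₀ : F z₀ ≠ 0 := norm_pos_iff.mp (hm.trans_le hlow)
  have hfin := hFan.finite_zeros_of_isCompact (convex_closedBall z₀ R).isPreconnected
    (isCompact_closedBall z₀ r) (closedBall_subset_closedBall hrR.le)
    (mem_closedBall_self hR.le) hFz₀
  refine ⟨hfin.toFinset, fun z => by simp, fun mult hmult => ?_⟩
  have hord : ∀ z ∈ hfin.toFinset, (mult z : ℕ∞) ≤ analyticOrderAt F z := fun z hz => by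
    obtain ⟨g, hg, -, hfg⟩ := hmult z hz
    exact (natCast_le_analyticOrderAt (hFan z ((hfin.mem_toFinset.mp hz).1 |>
      closedBall_subset_closedBall hrR.le))).mpr ⟨g, hg, hfg⟩
  have hjensen := norm_le_mul_pow_sum_of_le_analyticOrderAt hR hFan
    (fun w hw => hbd w (sphere_subset_closedBall hw)) hrR.le hfin.toFinset
    (fun z hz => (hfin.mem_toFinset.mp hz).1) mult hord
  exact_mod_cast natCast_le_log_div_log_of_le_mul_pow hr hrR hm (hlow.trans hjensen)

/-- **Jensen-type zero counting bound.**
If `F` is holomorphic on an open set containing the closed disc of radius `R` around `z₀`,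
`|F| ≤ M` on that disc, and `|F z₀| ≥ m > 0`, then the zeros of `F` in the closed disc of
radius `r < R` form a finite set, and their number counted with multiplicity is at most
`(log M - log m) / log (R / r)`. Multiplicity of a zero `z` is the analytic order, i.e. the
natural number `k` such that `F w = (w - z) ^ k * g w` near `z` with `g` analytic, `g z ≠ 0`. -/
theorem stmt0 (r R : ℝ) (hr : 0 < r) (hrR : r < R) (z₀ : ℂ) (m M : ℝ)
    (hm : 0 < m) (hmM : m ≤ M) (F : ℂ → ℂ) (s : Set ℂ) (hs : IsOpen s)
    (hsub : Metric.closedBall z₀ R ⊆ s) (hF : DifferentiableOn ℂ F s)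
    (hbd : ∀ z ∈ Metric.closedBall z₀ R, ‖F z‖ ≤ M)
    (hlow : m ≤ ‖F z₀‖) :
    ∃ Z : Finset ℂ,
      (∀ z : ℂ, z ∈ Z ↔ z ∈ Metric.closedBall z₀ r ∧ F z = 0) ∧
      ∀ mult : ℂ → ℕ,
        (∀ z ∈ Z, ∃ g : ℂ → ℂ, AnalyticAt ℂ g z ∧ g z ≠ 0 ∧
          ∀ᶠ w in nhds z, F w = (w - z) ^ (mult z) * g w) →
        (∑ z ∈ Z, (mult z : ℝ)) ≤ (Real.log M - Real.log m) / Real.log (R / r) :=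
  stmt0_general r R hr hrR z₀ m M hm F s hs hsub hF hbd hlow
end

section
/- Let n ≥ 2 be an integer, ρ, ρ' ∈ (0,1), δ ∈ [0, n−1], C₁ > 0, and let ψ̃ : ℝ → ℂ be a continuous compactly supported function. Then there exists C > 0 such that the following holds for every h ∈ (0,1]. Let ψ₊, ψ₋ : S^{n−1} → [0,1] and ψ₀ : ℝ → [0,1] be measurable functions and ψ : S^{n−1} × S^{n−1} → ℂ a measurable function with |ψ| ≤ C₁ everywhere, such that σ(supp ψ₊) ≤ C₁ h^{ρ(n−1−δ)}, σ(supp ψ₋) ≤ C₁ h^{ρ'(n−1−δ)}, and supp ψ₀ ⊆ [1 − C₁h^ρ, 1 + C₁h^ρ]. Define the kernel K(w, y, w', y') = (2πh)^{−(n+1)/2} · (|y−y'|/2)^{2iw/h} · ψ(y,y') · ψ₋(y) · ψ₊(y') · ψ₀(w) · ∫_ℝ e^{i(w−w')θ/h} ψ̃(θ) dθ for (w,y,w',y') ∈ ℝ × S^{n−1} × ℝ × S^{n−1}. Then ∫∫∫∫ |K(w,y,w',y')|² dw dσ(y) dw' dσ(y') ≤ C h^{−n + ρ(n−δ) + ρ'(n−1−δ)}.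 -/
open MeasureTheory
open scoped ENNReal

/-- The surface measure on the unit sphere `S^{n-1} ⊆ ℝⁿ`: the `(n-1)`-dimensional
Hausdorff measure of `EuclideanSpace ℝ (Fin n)`, pulled back to the sphere. -/
noncomputable def sphereSurfaceMeasure (n : ℕ) :
    Measure (Metric.sphere (0 : EuclideanSpace ℝ (Fin n)) 1) :=
  Measure.comap Subtype.val (μH[(n : ℝ) - 1])

/-!
Bounding the phase `(|y-y'|/2)^{2iw/h}` by `1`, `|ψ|` by `C₁` and each cut-off by the indicator
of its support, `|K|²` is dominated by `(2πh)^{-(n+1)} C₁² 1_I(w) 1_{supp ψ₋}(y) G(w-w')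
1_{supp ψ₊}(y')`, where `I = [1 - C₁h^ρ, 1 + C₁h^ρ]` and `G(s) = |∫ e^{isθ/h} ψ̃(θ) dθ|²`.
This majorant integrates to a product of four one-variable integrals. Since `G(s)` is
`|𝓕ψ̃(-s/2πh)|²`, Plancherel gives `∫ G = 2πh ‖ψ̃‖₂²`; the remaining factors are `|I| = 2C₁h^ρ`
and the two support measures, and the powers of `h` add up to `-n + ρ(n-δ) + ρ'(n-1-δ)`.
-/

open Real FourierTransform
open scoped NNReal ContDiff

section Plancherel

variable {V E : Type*} [NormedAddCommGroup V] [InnerProductSpace ℝ V] [FiniteDimensional ℝ V]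
  [MeasurableSpace V] [BorelSpace V] [NormedAddCommGroup E] [InnerProductSpace ℂ E]

theorem Real.continuous_fourier_of_integrable {f : V → E} (hf : Integrable f) :
    Continuous (𝓕 f) :=
  VectorFourier.fourierIntegral_continuous Real.continuous_fourierChar
    (innerSL ℝ).continuous₂ hf

variable [CompleteSpace E]

theorem Real.integral_smul_fourier_eq_of_integrable {f : V → E} (hf : Integrable f)
    (g : SchwartzMap V ℂ) : ∫ ξ, g ξ • 𝓕 f ξ = ∫ x, 𝓕 g x • f x := by
  have h := VectorFourier.integral_bilin_fourierIntegral_eq_flip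
    (ContinuousLinearMap.lsmul ℂ ℂ).flip (L := innerₗ V) Real.continuous_fourierChar
    continuous_inner hf (g.integrable (μ := volume))
  simp only [ContinuousLinearMap.lsmul_flip_apply, ContinuousLinearMap.toSpanSingleton_apply,
    flip_innerₗ] at h
  exact h

/-- Both sides define the same tempered distribution, so they agree against smooth compactly
supported test functions. -/
theorem MeasureTheory.MemLp.fourier_toLp_ae_eq {f : V → E} (hf : Integrable f)
    (hf2 : MemLp f 2) :
    ((𝓕 (hf2.toLp f) : Lp E 2 (volume : Measure V)) : V → E) =ᵐ[volume] 𝓕 f := by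
  refine ae_eq_of_integral_contDiff_smul_eq ((Lp.memLp _).locallyIntegrable (by norm_num))
    (Real.continuous_fourier_of_integrable hf).locallyIntegrable fun g g_smooth g_cpt => ?_
  have hg₁ : HasCompactSupport (Complex.ofRealCLM ∘ g) := g_cpt.comp_left rfl
  have hg₂ : ContDiff ℝ ∞ (Complex.ofRealCLM ∘ g) := by fun_prop
  set φ := hg₁.toSchwartzMap hg₂
  calc ∫ x, g x • (𝓕 (hf2.toLp f) : Lp E 2 (volume : Measure V)) x
      = Lp.toTemperedDistribution (𝓕 (hf2.toLp f)) φ := by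
        simp [φ, Lp.toTemperedDistribution_apply]
    _ = ∫ x, 𝓕 φ x • f x := by
        rw [← Lp.fourier_toTemperedDistribution_eq, TemperedDistribution.fourier_apply,
          Lp.toTemperedDistribution_apply]
        exact integral_congr_ae (hf2.coeFn_toLp.mono fun x hx => by simp only [hx])
    _ = ∫ x, g x • 𝓕 f x := by
        rw [← Real.integral_smul_fourier_eq_of_integrable hf]
        simp [φ]

theorem eLpNorm_fourier_two_eq {f : V → E} (hf : Integrable f) (hf2 : MemLp f 2) :
    eLpNorm (𝓕 f) 2 volume = eLpNorm f 2 volume := by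
  rw [← eLpNorm_congr_ae (hf2.fourier_toLp_ae_eq hf), ← eLpNorm_congr_ae hf2.coeFn_toLp,
    ← Lp.enorm_def, ← Lp.enorm_def]
  exact (Lp.fourierTransformₗᵢ V E).toLinearIsometry.enorm_map _

theorem lintegral_enorm_fourier_sq {f : V → E} (hf : Integrable f) (hf2 : MemLp f 2) :
    ∫⁻ ξ, ‖𝓕 f ξ‖ₑ ^ 2 = ∫⁻ x, ‖f x‖ₑ ^ 2 := by
  have h := congrArg (· ^ ((2 : ℝ≥0) : ℝ)) (eLpNorm_fourier_two_eq hf hf2)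
  rw [← ENNReal.coe_ofNat, eLpNorm_nnreal_pow_eq_lintegral two_ne_zero,
    eLpNorm_nnreal_pow_eq_lintegral two_ne_zero] at h
  simpa using h

end Plancherel

theorem Real.lintegral_comp_mul_left (f : ℝ → ℝ≥0∞) {a : ℝ} (ha : a ≠ 0) :
    ∫⁻ x, f (a * x) = ENNReal.ofReal |a⁻¹| * ∫⁻ x, f x := by
  rw [← smul_eq_mul, ← lintegral_smul_measure, ← Real.map_volume_mul_left ha]
  exact (lintegral_map_equiv f (Homeomorph.mulLeft₀ a ha).toMeasurableEquiv).symm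

theorem integral_cexp_mul_eq_fourier (ψ : ℝ → ℂ) (h s : ℝ) :
    ∫ θ : ℝ, Complex.exp (Complex.I * s * θ / h) * ψ θ = 𝓕 ψ (-(2 * π * h)⁻¹ * s) := by
  rw [Real.fourier_real_eq_integral_exp_smul]
  congr 1 with θ
  rw [smul_eq_mul]
  congr 2
  push_cast
  field_simp

theorem lintegral_enorm_integral_cexp_mul_sq {ψ : ℝ → ℂ} (hψ : Integrable ψ) (hψ2 : MemLp ψ 2)
    {h : ℝ} (hh : 0 < h) :
    ∫⁻ s : ℝ, ‖∫ θ : ℝ, Complex.exp (Complex.I * s * θ / h) * ψ θ‖ₑ ^ 2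
      = ENNReal.ofReal (2 * π * h) * ∫⁻ θ, ‖ψ θ‖ₑ ^ 2 := by
  simp_rw [integral_cexp_mul_eq_fourier ψ h]
  rw [Real.lintegral_comp_mul_left (fun ξ => ‖𝓕 ψ ξ‖ₑ ^ 2)
      (neg_ne_zero.2 (inv_ne_zero (by positivity))),
    lintegral_enorm_fourier_sq hψ hψ2, inv_neg, inv_inv, abs_neg, abs_of_pos (by positivity)]

theorem measurable_enorm_integral_cexp_mul_sq {ψ : ℝ → ℂ} (hψ : Integrable ψ) (h : ℝ) :
    Measurable fun s : ℝ => ‖∫ θ : ℝ, Complex.exp (Complex.I * s * θ / h) * ψ θ‖ₑ ^ 2 := by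
  simp only [integral_cexp_mul_eq_fourier ψ h]
  exact ((Real.continuous_fourier_of_integrable hψ).comp
    (continuous_const_mul _)).enorm.measurable.pow_const 2

theorem Complex.norm_ofReal_cpow_le_one {r : ℝ} (hr : 0 ≤ r) {s : ℂ} (hs : s.re = 0) :
    ‖(r : ℂ) ^ s‖ ≤ 1 := by
  simpa [hs, Complex.arg_ofReal_of_nonneg hr] using Complex.norm_cpow_le (r : ℂ) s

theorem enorm_sq_kernel_le_indicator {X : Type*} {ψm ψp : X → ℝ} {ψ₀ : ℝ → ℝ} {S : Set ℝ}
    (hψm : ∀ y, ψm y ∈ Set.Icc (0:ℝ) 1) (hψp : ∀ y, ψp y ∈ Set.Icc (0:ℝ) 1)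
    (hψ₀ : ∀ w, ψ₀ w ∈ Set.Icc (0:ℝ) 1) (hsupp : Function.support ψ₀ ⊆ S)
    {c r C h w : ℝ} (hc : 0 ≤ c) (hr : 0 ≤ r) {b F : ℂ} (hb : ‖b‖ ≤ C) (y y' : X) :
    (‖(c : ℂ) * (r : ℂ) ^ (2 * Complex.I * (w : ℂ) / (h : ℂ)) * b * (ψm y : ℂ) * (ψp y' : ℂ) *
        (ψ₀ w : ℂ) * F‖₊ : ℝ≥0∞) ^ 2
      ≤ S.indicator (fun _ => ENNReal.ofReal ((c * C) ^ 2)) w *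
          (Function.support ψm).indicator 1 y * ‖F‖ₑ ^ 2 *
          (Function.support ψp).indicator 1 y' := by
  by_cases hw : ψ₀ w = 0
  · simp [hw]
  by_cases hy : ψm y = 0
  · simp [hy]
  by_cases hy' : ψp y' = 0
  · simp [hy']
  rw [Set.indicator_of_mem (hsupp hw), Set.indicator_of_mem hy, Set.indicator_of_mem hy',
    Pi.one_apply, Pi.one_apply, mul_one, mul_one]
  have hcut : ∀ u ∈ Set.Icc (0:ℝ) 1, ‖u‖ ≤ 1 := fun u hu => by
    rw [Real.norm_of_nonneg hu.1]; exact hu.2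
  have hC : 0 ≤ C := (norm_nonneg b).trans hb
  have hphase : ‖(r : ℂ) ^ (2 * Complex.I * (w : ℂ) / (h : ℂ))‖ ≤ 1 :=
    Complex.norm_ofReal_cpow_le_one hr (by simp)
  have hK : ‖(c : ℂ) * (r : ℂ) ^ (2 * Complex.I * (w : ℂ) / (h : ℂ)) * b * (ψm y : ℂ) *
      (ψp y' : ℂ) * (ψ₀ w : ℂ) * F‖ ≤ c * C * ‖F‖ := by
    simp only [norm_mul, Complex.norm_real, Real.norm_of_nonneg hc]
    calc _ ≤ c * 1 * C * 1 * 1 * 1 * ‖F‖ := by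
          gcongr
          exacts [hcut _ (hψm y), hcut _ (hψp y'), hcut _ (hψ₀ w)]
      _ = c * C * ‖F‖ := by ring
  rw [← enorm_eq_nnnorm, ← ofReal_norm, ← ofReal_norm, ← ENNReal.ofReal_pow (norm_nonneg _),
    ← ENNReal.ofReal_pow (norm_nonneg _), ← ENNReal.ofReal_mul (sq_nonneg _), ← mul_pow]
  exact ENNReal.ofReal_le_ofReal (pow_le_pow_left₀ (norm_nonneg _) hK 2)

theorem lintegral_lintegral_lintegral_lintegral_mul_comp_sub {Y : Type*} [MeasurableSpace Y]
    (ν : Measure Y) {I G : ℝ → ℝ≥0∞} {J K : Y → ℝ≥0∞} (hI : Measurable I) (hJ : Measurable J)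
    (hG : Measurable G) (hK : Measurable K) :
    ∫⁻ w, ∫⁻ y, ∫⁻ w', ∫⁻ y', I w * J y * G (w - w') * K y' ∂ν ∂volume ∂ν ∂volume
      = (∫⁻ w, I w) * (∫⁻ y, J y ∂ν) * (∫⁻ s, G s) * ∫⁻ y', K y' ∂ν := by
  have hGw : ∀ w : ℝ, Measurable fun w' => G (w - w') := fun w =>
    hG.comp (measurable_const.sub measurable_id)
  simp_rw [lintegral_const_mul _ hK, lintegral_mul_const _ ((hGw _).const_mul _),
    lintegral_const_mul _ (hGw _), lintegral_sub_left_eq_self G,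
    lintegral_mul_const _ ((hJ.const_mul _).mul_const _), lintegral_mul_const _ (hJ.const_mul _),
    lintegral_const_mul _ hJ, lintegral_mul_const _ ((hI.mul_const _).mul_const _),
    lintegral_mul_const _ (hI.mul_const _), lintegral_mul_const _ hI]

theorem hilbertSchmidt_product_le {n ρ ρ' δ C₁ h m : ℝ} {M σm σp : ℝ≥0∞} (hC₁ : 0 ≤ C₁)
    (hh : 0 < h) (hm : 0 ≤ m) (hM : M ≤ ENNReal.ofReal m)
    (hσm : σm ≤ ENNReal.ofReal (C₁ * h ^ (ρ' * (n - 1 - δ))))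
    (hσp : σp ≤ ENNReal.ofReal (C₁ * h ^ (ρ * (n - 1 - δ)))) :
    ENNReal.ofReal (((2 * π * h) ^ (-(n + 1) / 2) * C₁) ^ 2) *
        volume (Set.Icc (1 - C₁ * h ^ ρ) (1 + C₁ * h ^ ρ)) * σm *
        (ENNReal.ofReal (2 * π * h) * M) * σp
      ≤ ENNReal.ofReal (4 * π * (2 * π) ^ (-(n + 1)) * C₁ ^ 5 * m *
          h ^ (-n + ρ * (n - δ) + ρ' * (n - 1 - δ))) := by
  have hsq : ((2 * π * h) ^ (-(n + 1) / 2)) ^ 2 = (2 * π) ^ (-(n + 1)) * h ^ (-(n + 1)) := by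
    rw [← Real.rpow_natCast, ← Real.rpow_mul (by positivity), Real.mul_rpow (by positivity) hh.le]
    norm_num
  have hexp : -n + ρ * (n - δ) + ρ' * (n - 1 - δ)
      = -(n + 1) + ρ + ρ' * (n - 1 - δ) + 1 + ρ * (n - 1 - δ) := by ring
  calc _ ≤ ENNReal.ofReal (((2 * π * h) ^ (-(n + 1) / 2) * C₁) ^ 2) *
        ENNReal.ofReal (2 * (C₁ * h ^ ρ)) * ENNReal.ofReal (C₁ * h ^ (ρ' * (n - 1 - δ))) *
        (ENNReal.ofReal (2 * π * h) * ENNReal.ofReal m) *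
        ENNReal.ofReal (C₁ * h ^ (ρ * (n - 1 - δ))) := by
        rw [Real.volume_Icc, show 1 + C₁ * h ^ ρ - (1 - C₁ * h ^ ρ) = 2 * (C₁ * h ^ ρ) by ring]
        gcongr
    _ = _ := by
        rw [← ENNReal.ofReal_mul (by positivity), ← ENNReal.ofReal_mul (by positivity),
          ← ENNReal.ofReal_mul (by positivity), ← ENNReal.ofReal_mul (by positivity),
          ← ENNReal.ofReal_mul (by positivity), hexp, Real.rpow_add hh, Real.rpow_add hh,
          Real.rpow_add hh, Real.rpow_add hh, Real.rpow_one, mul_pow, hsq]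
        ring_nf

theorem stmt2_general (n : ℕ) (ρ ρ' δ : ℝ)
    (C₁ : ℝ) (hC₁ : 0 < C₁)
    (ψt : ℝ → ℂ) (hψt : Continuous ψt) (hψtsupp : HasCompactSupport ψt) :
    ∃ C > 0, ∀ h ∈ Set.Ioc (0:ℝ) 1,
      ∀ (ψp ψm : Metric.sphere (0 : EuclideanSpace ℝ (Fin n)) 1 → ℝ)
        (ψ₀ : ℝ → ℝ)
        (ψ : Metric.sphere (0 : EuclideanSpace ℝ (Fin n)) 1 →
             Metric.sphere (0 : EuclideanSpace ℝ (Fin n)) 1 → ℂ),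
        Measurable ψp → Measurable ψm → Measurable ψ₀ →
        Measurable (Function.uncurry ψ) →
        (∀ y, ψp y ∈ Set.Icc (0:ℝ) 1) → (∀ y, ψm y ∈ Set.Icc (0:ℝ) 1) →
        (∀ w, ψ₀ w ∈ Set.Icc (0:ℝ) 1) →
        (∀ y y', ‖ψ y y'‖ ≤ C₁) →
        sphereSurfaceMeasure n (Function.support ψp)
          ≤ ENNReal.ofReal (C₁ * h ^ (ρ * ((n:ℝ) - 1 - δ))) →
        sphereSurfaceMeasure n (Function.support ψm)
          ≤ ENNReal.ofReal (C₁ * h ^ (ρ' * ((n:ℝ) - 1 - δ))) →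
        Function.support ψ₀ ⊆ Set.Icc (1 - C₁ * h ^ ρ) (1 + C₁ * h ^ ρ) →
        (∫⁻ w : ℝ, ∫⁻ y, ∫⁻ w' : ℝ, ∫⁻ y',
            (‖(((2 * Real.pi * h) ^ (-((n:ℝ) + 1) / 2) : ℝ) : ℂ) *
                (((‖(y : EuclideanSpace ℝ (Fin n)) - (y' : EuclideanSpace ℝ (Fin n))‖
                    / 2 : ℝ) : ℂ) ^ (2 * Complex.I * (w : ℂ) / (h : ℂ))) *
                ψ y y' * ((ψm y : ℝ) : ℂ) * ((ψp y' : ℝ) : ℂ) * ((ψ₀ w : ℝ) : ℂ) *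
                (∫ θ : ℝ, Complex.exp (Complex.I * ((w : ℂ) - (w' : ℂ)) * (θ : ℂ)
                    / (h : ℂ)) * ψt θ)‖₊ : ℝ≥0∞) ^ 2
              ∂(sphereSurfaceMeasure n) ∂(volume : Measure ℝ)
            ∂(sphereSurfaceMeasure n) ∂(volume : Measure ℝ))
          ≤ ENNReal.ofReal
              (C * h ^ (-(n:ℝ) + ρ * ((n:ℝ) - δ) + ρ' * ((n:ℝ) - 1 - δ))) := by
  have hψt1 : Integrable ψt := hψt.integrable_of_hasCompactSupport hψtsupp
  have hψt2 : MemLp ψt 2 := hψt.memLp_of_hasCompactSupport hψtsupp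
  set M := ∫⁻ θ, ‖ψt θ‖ₑ ^ 2
  have hM : M ≠ ⊤ := by
    simpa using (lintegral_rpow_enorm_lt_top_of_eLpNorm_lt_top two_ne_zero ENNReal.ofNat_ne_top
      hψt2.2).ne
  refine ⟨4 * π * (2 * π) ^ (-((n:ℝ) + 1)) * C₁ ^ 5 * (M.toReal + 1), by positivity, ?_⟩
  rintro h ⟨hh, -⟩ ψp ψm ψ₀ ψ hψp hψm - - hψp01 hψm01 hψ₀01 hψC hσp hσm hsupp₀
  set c := (2 * π * h) ^ (-((n:ℝ) + 1) / 2)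
  set G : ℝ → ℝ≥0∞ := fun s => ‖∫ θ : ℝ, Complex.exp (Complex.I * s * θ / h) * ψt θ‖ₑ ^ 2
  calc _ ≤ ∫⁻ w : ℝ, ∫⁻ y, ∫⁻ w' : ℝ, ∫⁻ y',
          (Set.Icc (1 - C₁ * h ^ ρ) (1 + C₁ * h ^ ρ)).indicator
            (fun _ => ENNReal.ofReal ((c * C₁) ^ 2)) w *
          (Function.support ψm).indicator 1 y * G (w - w') * (Function.support ψp).indicator 1 y'
          ∂(sphereSurfaceMeasure n) ∂volume ∂(sphereSurfaceMeasure n) ∂volume := by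
        refine lintegral_mono fun w => lintegral_mono fun y => lintegral_mono fun w' =>
          lintegral_mono fun y' => ?_
        rw [show G (w - w') = ‖∫ θ : ℝ, Complex.exp (Complex.I * ((w : ℂ) - (w' : ℂ)) * θ / h) *
          ψt θ‖ₑ ^ 2 by simp only [G, Complex.ofReal_sub]]
        exact enorm_sq_kernel_le_indicator hψm01 hψp01 hψ₀01 hsupp₀ (by positivity)
          (by positivity) (hψC y y') y y'
    _ ≤ _ := by
        have hSm : MeasurableSet (Function.support ψm) := hψm (measurableSet_singleton 0).compl
        have hSp : MeasurableSet (Function.support ψp) := hψp (measurableSet_singleton 0).compl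
        rw [lintegral_lintegral_lintegral_lintegral_mul_comp_sub _
          (measurable_const.indicator measurableSet_Icc) (measurable_one.indicator hSm)
          (measurable_enorm_integral_cexp_mul_sq hψt1 h)
          (measurable_one.indicator hSp), lintegral_indicator_const measurableSet_Icc,
          lintegral_indicator_one hSm, lintegral_indicator_one hSp,
          lintegral_enorm_integral_cexp_mul_sq hψt1 hψt2 hh]
        exact hilbertSchmidt_product_le hC₁.le hh (by positivity)
          (ENNReal.le_ofReal_iff_toReal_le hM (by positivity) |>.2 (by linarith)) hσm hσp

/-- **The Hilbert–Schmidt kernel estimate (Lemma `l:hs-inside`).**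
Let `n ≥ 2`, `ρ, ρ' ∈ (0,1)`, `δ ∈ [0, n-1]`, `C₁ > 0`, and `ψ̃ : ℝ → ℂ` continuous with
compact support. Then there is `C > 0` such that for all `h ∈ (0,1]` and all measurable
`ψ₊, ψ₋ : S^{n-1} → [0,1]`, `ψ₀ : ℝ → [0,1]`, `ψ : S^{n-1} × S^{n-1} → ℂ` with `|ψ| ≤ C₁`,
`σ(supp ψ₊) ≤ C₁ h^{ρ(n-1-δ)}`, `σ(supp ψ₋) ≤ C₁ h^{ρ'(n-1-δ)}`, and
`supp ψ₀ ⊆ [1-C₁h^ρ, 1+C₁h^ρ]`, the squared `L²`-norm of the kernel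
`K(w,y,w',y') = (2πh)^{-(n+1)/2} (|y-y'|/2)^{2iw/h} ψ(y,y') ψ₋(y) ψ₊(y') ψ₀(w)
∫ e^{i(w-w')θ/h} ψ̃(θ) dθ` is at most `C h^{-n+ρ(n-δ)+ρ'(n-1-δ)}`. -/
theorem stmt2 (n : ℕ) (hn : 2 ≤ n) (ρ ρ' δ : ℝ)
    (hρ : ρ ∈ Set.Ioo (0:ℝ) 1) (hρ' : ρ' ∈ Set.Ioo (0:ℝ) 1)
    (hδ : δ ∈ Set.Icc (0:ℝ) ((n:ℝ) - 1))
    (C₁ : ℝ) (hC₁ : 0 < C₁)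
    (ψt : ℝ → ℂ) (hψt : Continuous ψt) (hψtsupp : HasCompactSupport ψt) :
    ∃ C > 0, ∀ h ∈ Set.Ioc (0:ℝ) 1,
      ∀ (ψp ψm : Metric.sphere (0 : EuclideanSpace ℝ (Fin n)) 1 → ℝ)
        (ψ₀ : ℝ → ℝ)
        (ψ : Metric.sphere (0 : EuclideanSpace ℝ (Fin n)) 1 →
             Metric.sphere (0 : EuclideanSpace ℝ (Fin n)) 1 → ℂ),
        Measurable ψp → Measurable ψm → Measurable ψ₀ →
        Measurable (Function.uncurry ψ) →
        (∀ y, ψp y ∈ Set.Icc (0:ℝ) 1) → (∀ y, ψm y ∈ Set.Icc (0:ℝ) 1) →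
        (∀ w, ψ₀ w ∈ Set.Icc (0:ℝ) 1) →
        (∀ y y', ‖ψ y y'‖ ≤ C₁) →
        sphereSurfaceMeasure n (Function.support ψp)
          ≤ ENNReal.ofReal (C₁ * h ^ (ρ * ((n:ℝ) - 1 - δ))) →
        sphereSurfaceMeasure n (Function.support ψm)
          ≤ ENNReal.ofReal (C₁ * h ^ (ρ' * ((n:ℝ) - 1 - δ))) →
        Function.support ψ₀ ⊆ Set.Icc (1 - C₁ * h ^ ρ) (1 + C₁ * h ^ ρ) →
        (∫⁻ w : ℝ, ∫⁻ y, ∫⁻ w' : ℝ, ∫⁻ y',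
            (‖(((2 * Real.pi * h) ^ (-((n:ℝ) + 1) / 2) : ℝ) : ℂ) *
                (((‖(y : EuclideanSpace ℝ (Fin n)) - (y' : EuclideanSpace ℝ (Fin n))‖
                    / 2 : ℝ) : ℂ) ^ (2 * Complex.I * (w : ℂ) / (h : ℂ))) *
                ψ y y' * ((ψm y : ℝ) : ℂ) * ((ψp y' : ℝ) : ℂ) * ((ψ₀ w : ℝ) : ℂ) *
                (∫ θ : ℝ, Complex.exp (Complex.I * ((w : ℂ) - (w' : ℂ)) * (θ : ℂ)
                    / (h : ℂ)) * ψt θ)‖₊ : ℝ≥0∞) ^ 2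
              ∂(sphereSurfaceMeasure n) ∂(volume : Measure ℝ)
            ∂(sphereSurfaceMeasure n) ∂(volume : Measure ℝ))
          ≤ ENNReal.ofReal
              (C * h ^ (-(n:ℝ) + ρ * ((n:ℝ) - δ) + ρ' * ((n:ℝ) - 1 - δ))) :=
  stmt2_general n ρ ρ' δ C₁ hC₁ ψt hψt hψtsupp
end

section
/- Let X be a topological space and φ : ℝ → (X ≃ X) a flow by homeomorphisms of X, i.e. each φ(t) is a homeomorphism, φ(0) = id, and φ(s+t) = φ(s) ∘ φ(t) for all s,t ∈ ℝ. Let χ, χ₁ : X → [0,1] be continuous functions, and let T₀ > 0 and T ≥ 2T₀. Assume: (H1) for all t ∈ [T₀, T₀+T] and all x ∈ tsupport χ₁, χ(φ(−t)(x)) = 1; (H2) for all t₁, t₂ ≥ T₀ and all x ∈ X, if x ∈ φ(t₁)(tsupport χ) and x ∈ φ(−t₂)(tsupport χ₁), then x ∉ tsupport(1−χ). Let s, s' ∈ ℝ with s ≥ 0 and s' − s ∈ [T/2, T]. Then for every x ∈ tsupport(χ₁ · ((1−χ) ∘ φ(−s'))), the point w := φ(−(s'−s+T₀))(x) satisfies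 χ(w) = 1 and χ(φ(−s)(w)) = 0; that is, φ(−(s'−s+T₀)) maps tsupport(χ₁ · ((1−χ)∘φ(−s'))) into the set {χ · (1 − χ∘φ(−s)) = 1}. -/
/-- **Dynamical inclusion (e:dynamo1) for the outgoing tail.**
Let `φ` be a flow by homeomorphisms on `X`, `χ, χ₁ : X → [0,1]` continuous, `T₀ > 0`,
`T ≥ 2T₀`, satisfying the conditions (cookie1) and (cookie2). If `s ≥ 0` and
`s' - s ∈ [T/2, T]`, then `φ(-(s'-s+T₀))` maps `tsupport (χ₁ · ((1-χ) ∘ φ(-s')))` into the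
set where `χ · (1 - χ ∘ φ(-s)) = 1`. -/
theorem stmt4 {X : Type*} [TopologicalSpace X]
    (φ : ℝ → X ≃ₜ X)
    (hφ0 : ∀ x : X, φ 0 x = x)
    (hφadd : ∀ (s t : ℝ) (x : X), φ (s + t) x = φ s (φ t x))
    (χ χ₁ : X → ℝ) (hχ : Continuous χ) (hχ₁ : Continuous χ₁)
    (hχ01 : ∀ x, χ x ∈ Set.Icc (0:ℝ) 1) (hχ₁01 : ∀ x, χ₁ x ∈ Set.Icc (0:ℝ) 1)
    (T₀ T : ℝ) (hT₀ : 0 < T₀) (hT : 2 * T₀ ≤ T)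
    (H1 : ∀ t ∈ Set.Icc T₀ (T₀ + T), ∀ x ∈ tsupport χ₁, χ (φ (-t) x) = 1)
    (H2 : ∀ t₁ t₂ : ℝ, T₀ ≤ t₁ → T₀ ≤ t₂ → ∀ x : X,
      x ∈ (φ t₁) '' (tsupport χ) → x ∈ (φ (-t₂)) '' (tsupport χ₁) →
      x ∉ tsupport (fun y => 1 - χ y))
    (s s' : ℝ) (hs : 0 ≤ s) (hss' : s' - s ∈ Set.Icc (T / 2) T) :
    ∀ x ∈ tsupport (fun y => χ₁ y * (1 - χ (φ (-s') y))),
      χ (φ (-(s' - s + T₀)) x) = 1 ∧ χ (φ (-s) (φ (-(s' - s + T₀)) x)) = 0 := by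
  intro x hx
  have hsub1 : tsupport (fun y => χ₁ y * (1 - χ (φ (-s') y))) ⊆ tsupport χ₁ :=
    closure_mono (fun y hy => left_ne_zero_of_mul hy)
  have hsub2 : tsupport (fun y => χ₁ y * (1 - χ (φ (-s') y))) ⊆
      tsupport ((fun y => 1 - χ y) ∘ (φ (-s'))) :=
    closure_mono (fun y hy => right_ne_zero_of_mul hy)
  have hx1 : x ∈ tsupport χ₁ := hsub1 hx
  have key : tsupport ((fun y => 1 - χ y) ∘ (φ (-s'))) =
      (φ (-s')) ⁻¹' tsupport (fun y => 1 - χ y) := by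
    rw [tsupport, Function.support_comp_eq_preimage, ← Homeomorph.preimage_closure]
    rfl
  have hz : φ (-s') x ∈ tsupport (fun y => 1 - χ y) := by
    have := hsub2 hx
    rw [key] at this
    exact this
  have hs' : T₀ ≤ s' := by
    have h1 := hss'.1
    linarith
  constructor
  · apply H1 (s' - s + T₀) ⟨by linarith [hss'.1], by linarith [hss'.2]⟩ x hx1
  · by_contra h
    have heq : -s + -(s' - s + T₀) = -(s' + T₀) := by ring
    have hy : φ (-s) (φ (-(s' - s + T₀)) x) = φ (-(s' + T₀)) x := by
      rw [← hφadd, heq]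
    rw [hy] at h
    have hyts : φ (-(s' + T₀)) x ∈ tsupport χ := subset_closure h
    have heq2 : T₀ + -(s' + T₀) = -s' := by ring
    have hz1 : φ (-s') x ∈ (φ T₀) '' (tsupport χ) :=
      ⟨φ (-(s' + T₀)) x, hyts, by rw [← hφadd, heq2]⟩
    have hz2 : φ (-s') x ∈ (φ (-s')) '' (tsupport χ₁) := ⟨x, hx1, rfl⟩
    exact H2 T₀ s' le_rfl hs' _ hz1 hz2 hz
end

section
/- Let X be a topological space and φ : ℝ → (X ≃ X) a flow by homeomorphisms of X, i.e. each φ(t) is a homeomorphism, φ(0) = id, and φ(s+t) = φ(s) ∘ φ(t) for all s,t ∈ ℝ. Let χ, χ₁ : X → [0,1] be continuous functions, and let T₀ > 0 and T ≥ 2T₀. Assume: (H1) for all t ∈ [T₀, T₀+T] and all x ∈ tsupport χ₁, χ(φ(−t)(x)) = 1; (H3) for all t₁, t₂ ≥ T₀ and all x ∈ X, if x ∈ φ(t₁)(tsupport χ₁) and x ∈ φ(−t₂)(tsupport χ), then x ∉ tsupport(1−χ). Let s, s' ∈ ℝ with s ≥ 2T₀ and s' − s ∈ [T/2, T]. Then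 for every x ∈ tsupport(χ₁ · (χ ∘ φ(s))), the point w := φ(−(s'−s+T₀))(x) satisfies χ(w) = 1 and χ(φ(s')(w)) = 1; that is, φ(−(s'−s+T₀)) maps tsupport(χ₁ · (χ∘φ(s))) into the set {χ · (χ∘φ(s')) = 1}. -/
/-- **Dynamical inclusion (e:dynamo2) for the incoming tail.**
Let `φ` be a flow by homeomorphisms on `X`, `χ, χ₁ : X → [0,1]` continuous, `T₀ > 0`,
`T ≥ 2T₀`, satisfying the conditions (cookie1) and (cookie3). If `s ≥ 2T₀` and
`s' - s ∈ [T/2, T]`, then `φ(-(s'-s+T₀))` maps `tsupport (χ₁ · (χ ∘ φ(s)))` into the set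
where `χ · (χ ∘ φ(s'))= 1`. -/
theorem stmt5 {X : Type*} [TopologicalSpace X]
    (φ : ℝ → X ≃ₜ X)
    (hφ0 : ∀ x : X, φ 0 x = x)
    (hφadd : ∀ (s t : ℝ) (x : X), φ (s + t) x = φ s (φ t x))
    (χ χ₁ : X → ℝ) (hχ : Continuous χ) (hχ₁ : Continuous χ₁)
    (hχ01 : ∀ x, χ x ∈ Set.Icc (0:ℝ) 1) (hχ₁01 : ∀ x, χ₁ x ∈ Set.Icc (0:ℝ) 1)
    (T₀ T : ℝ) (hT₀ : 0 < T₀) (hT : 2 * T₀ ≤ T)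
    (H1 : ∀ t ∈ Set.Icc T₀ (T₀ + T), ∀ x ∈ tsupport χ₁, χ (φ (-t) x) = 1)
    (H3 : ∀ t₁ t₂ : ℝ, T₀ ≤ t₁ → T₀ ≤ t₂ → ∀ x : X,
      x ∈ (φ t₁) '' (tsupport χ₁) → x ∈ (φ (-t₂)) '' (tsupport χ) →
      x ∉ tsupport (fun y => 1 - χ y))
    (s s' : ℝ) (hs : 2 * T₀ ≤ s) (hss' : s' - s ∈ Set.Icc (T / 2) T) :
    ∀ x ∈ tsupport (fun y => χ₁ y * χ (φ s y)),
      χ (φ (-(s' - s + T₀)) x) = 1 ∧ χ (φ s' (φ (-(s' - s + T₀)) x)) = 1 := by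
  intro x hx
  have hx1 : x ∈ tsupport χ₁ := tsupport_mul_subset_left hx
  have hx2 : φ s x ∈ tsupport χ := by
    have h : tsupport (fun y => χ (φ s y)) = (φ s) ⁻¹' tsupport χ := by
      have hsupp : (Function.support fun y => χ ((φ s) y)) = ⇑(φ s) ⁻¹' Function.support χ := rfl
      unfold tsupport
      rw [hsupp, ← Homeomorph.preimage_closure]
    have hx' : x ∈ tsupport (fun y => χ (φ s y)) := tsupport_mul_subset_right hx
    rw [h] at hx'; exact hx'
  obtain ⟨hl, hu⟩ := hss'
  have hTpos : 0 < T := by linarith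
  constructor
  · exact H1 (s' - s + T₀) ⟨by linarith, by linarith⟩ x hx1
  · have e1 : s' + (-(s' - s + T₀)) = s - T₀ := by ring
    have hw : φ s' (φ (-(s' - s + T₀)) x) = φ (s - T₀) x := by
      rw [← hφadd, e1]
    rw [hw]
    have hmem1 : φ (s - T₀) x ∈ (φ (s - T₀)) '' tsupport χ₁ := ⟨x, hx1, rfl⟩
    have hmem2 : φ (s - T₀) x ∈ (φ (-T₀)) '' tsupport χ := by
      refine ⟨φ s x, hx2, ?_⟩
      have e2 : -T₀ + s = s - T₀ := by ring
      rw [← hφadd, e2]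
    have hn := H3 (s - T₀) T₀ (by linarith) le_rfl _ hmem1 hmem2
    have h0 : (fun y => 1 - χ y) (φ (s - T₀) x) = 0 :=
      image_eq_zero_of_notMem_tsupport (f := fun y => 1 - χ y) hn
    simp only at h0
    linarith
end

section
/- Let X be a topological space and φ : ℝ → (X ≃ X) a flow by homeomorphisms of X, i.e. each φ(t) is a homeomorphism, φ(0) = id, and φ(s+t) = φ(s) ∘ φ(t) for all s,t ∈ ℝ. Let T₀ > 0, let A ⊆ X be a set with φ(−T₀)(A) ⊆ A, and let χ, χ₁, χ₂ : X → [0,1] be continuous functions with χ = χ₁ + χ₂ and tsupport χ₂ ∩ A = ∅. Assume that for every x ∈ A ∩ tsupport χ one has φ(−T₀)(x) ∉ tsupport(1−χ). Then tsupport χ ∩ φ(T₀)(tsupport(1−χ₁)) ∩ A = ∅. -/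
/-- **Disjointness claim (e:i-hate-point-set-topology).**
Let `φ` be a flow by homeomorphisms on `X`, `T₀ > 0`, `A ⊆ X` backward-invariant at time
`T₀`, and `χ = χ₁ + χ₂` continuous `[0,1]`-valued functions with `tsupport χ₂ ∩ A = ∅`.
If every `x ∈ A ∩ tsupport χ` has `φ(-T₀) x ∉ tsupport (1-χ)`, then
`tsupport χ ∩ φ(T₀)(tsupport (1-χ₁)) ∩ A = ∅`. -/
theorem stmt6 {X : Type*} [TopologicalSpace X]
    (φ : ℝ → X ≃ₜ X)
    (hφ0 : ∀ x : X, φ 0 x = x)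
    (hφadd : ∀ (s t : ℝ) (x : X), φ (s + t) x = φ s (φ t x))
    (T₀ : ℝ) (hT₀ : 0 < T₀)
    (A : Set X) (hA : (φ (-T₀)) '' A ⊆ A)
    (χ χ₁ χ₂ : X → ℝ)
    (hχ : Continuous χ) (hχ₁ : Continuous χ₁) (hχ₂ : Continuous χ₂)
    (hχ01 : ∀ x, χ x ∈ Set.Icc (0:ℝ) 1) (hχ₁01 : ∀ x, χ₁ x ∈ Set.Icc (0:ℝ) 1)
    (hχ₂01 : ∀ x, χ₂ x ∈ Set.Icc (0:ℝ) 1)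
    (hsum : ∀ x, χ x = χ₁ x + χ₂ x)
    (hχ₂A : tsupport χ₂ ∩ A = ∅)
    (hesc : ∀ x ∈ A ∩ tsupport χ, φ (-T₀) x ∉ tsupport (fun y => 1 - χ y)) :
    tsupport χ ∩ ((φ T₀) '' (tsupport (fun y => 1 - χ₁ y))) ∩ A = ∅ := by
  ext x
  simp only [Set.mem_inter_iff, Set.mem_empty_iff_false, iff_false]
  rintro ⟨⟨hxχ, y, hy, rfl⟩, hxA⟩
  -- y = φ(-T₀)(φ T₀ y)
  have hyinv : φ (-T₀) (φ T₀ y) = y := by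
    rw [← hφadd, neg_add_cancel, hφ0]
  have hyA : y ∈ A := by
    have := hA ⟨φ T₀ y, hxA, hyinv⟩
    exact this
  have hesc' := hesc (φ T₀ y) ⟨hxA, hxχ⟩
  rw [hyinv] at hesc'
  rw [notMem_tsupport_iff_eventuallyEq] at hesc'
  have hyχ₂ : y ∉ tsupport χ₂ := fun h => (Set.eq_empty_iff_forall_notMem.1 hχ₂A y) ⟨h, hyA⟩
  rw [notMem_tsupport_iff_eventuallyEq] at hyχ₂
  have : (fun z => 1 - χ₁ z) =ᶠ[nhds y] 0 := by
    filter_upwards [hesc', hyχ₂] with z h1 h2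
    have : χ z = χ₁ z + χ₂ z := hsum z
    simp only [Pi.zero_apply] at h1 h2 ⊢
    linarith
  exact (notMem_tsupport_iff_eventuallyEq.2 this) hy
end
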